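/- One has h < m if and only if b_α > 0; moreover, if h < m then d(B_α) = m − h and hence q_α(B_α) = (b_α − m + h)/b_α < 1, a non-trivial confidence bound for the false discovery proportion of the Benjamini–Hochberg rejection set. -/

import Mathlib

open Finset

attribute [local instance] Classical.propDecidable

/-- The `i`-th smallest (1-indexed) element of the multiset of p-values `{p_j : j ∈ I}`. -/
noncomputable def pOrd {m : ℕ} (p : Fin m → ℝ) (I : Finset (Fin m)) (i : ℕ) : ℝ :=
  ((I.val.map p).sort (· ≤ ·)).getD (i - 1) 0

/-- The Simes local test rejects `H_I` (written `I ∈ 𝒰`) iff `I` is nonempty and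
`|I|·p_{(i:I)} ≤ i·α` for at least one `1 ≤ i ≤ |I|`. -/
def SimesU {m : ℕ} (α : ℝ) (p : Fin m → ℝ) (I : Finset (Fin m)) : Prop :=
  ∃ i, 1 ≤ i ∧ i ≤ I.card ∧ (I.card : ℝ) * pOrd p I i ≤ (i : ℝ) * α

/-- Closed testing rejects `H_I` (written `I ∈ 𝒳`) iff `J ∈ 𝒰` for every `J ⊇ I`. -/
def ClosedX {m : ℕ} (α : ℝ) (p : Fin m → ℝ) (I : Finset (Fin m)) : Prop :=
  ∀ J, I ⊆ J → SimesU α p J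

/-- `K_i = {r_{m−i+1},…,r_m}`: the `i` indices with largest p-values. -/
def Kset {m : ℕ} (r : Fin m → Fin m) (i : ℕ) : Finset (Fin m) :=
  (Finset.univ.filter fun j : Fin m => m - i ≤ (j : ℕ)).image r

/-- `L_i = {r_1,…,r_i}`: the `i` indices with smallest p-values. -/
def Lset {m : ℕ} (r : Fin m → Fin m) (i : ℕ) : Finset (Fin m) :=
  (Finset.univ.filter fun j : Fin m => (j : ℕ) < i).image r

/-- `h = max{0 ≤ i ≤ m : K_i ∉ 𝒰}`. -/
noncomputable def hval {m : ℕ} (α : ℝ) (p : Fin m → ℝ) (r : Fin m → Fin m) : ℕ :=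
  sSup {i | i ≤ m ∧ ¬ SimesU α p (Kset r i)}

/-- `t(S) = max{|I| : I ⊆ S, I ∉ 𝒳}`. -/
noncomputable def tval {m : ℕ} (α : ℝ) (p : Fin m → ℝ) (S : Finset (Fin m)) : ℕ :=
  sSup {k | ∃ I, I ⊆ S ∧ ¬ ClosedX α p I ∧ I.card = k}

/-- `d(S) = |S| − t(S)`. -/
noncomputable def dval {m : ℕ} (α : ℝ) (p : Fin m → ℝ) (S : Finset (Fin m)) : ℕ :=
  S.card - tval α p S

/-- `q_α(S) = t(S)/|S|` for nonempty `S`, and `0` for `S = ∅`. -/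
noncomputable def qval {m : ℕ} (α : ℝ) (p : Fin m → ℝ) (S : Finset (Fin m)) : ℝ :=
  if S = ∅ then 0 else (tval α p S : ℝ) / S.card

/-- `z = 0` if `h = m`, else `z = min{m−h ≤ i ≤ m : h·p_{(i)} ≤ (i−m+h+1)·α}`. -/
noncomputable def zval {m : ℕ} (α : ℝ) (p : Fin m → ℝ) (r : Fin m → Fin m) : ℕ :=
  if hval α p r = m then 0 else
    sInf {i | m - hval α p r ≤ i ∧ i ≤ m ∧
      (hval α p r : ℝ) * pOrd p Finset.univ i ≤ ((i : ℝ) - m + hval α p r + 1) * α}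

/-- `b_q = max{1 ≤ i ≤ m : m·p_{(i)} ≤ i·q}` (with `b_q = 0` if no such `i`). -/
noncomputable def bval {m : ℕ} (q : ℝ) (p : Fin m → ℝ) : ℕ :=
  sSup {i | 1 ≤ i ∧ i ≤ m ∧ (m : ℝ) * pOrd p Finset.univ i ≤ (i : ℝ) * q}

/-!
The Simes test rejects `H_I` iff `i ≤ #{y ∈ I | |I| * p y ≤ i * α}` for some `i ≥ 1`. Since
`p ∘ r` is monotone, every set `{y | c * p y ≤ d}` with `c ≥ 0` is an initial segment `L_N`.
Consequently `K_k` is the hardest set of size `k` to reject, and a Simes witness `j` for `K_k`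
makes `m - k + j` a Benjamini–Hochberg index, so `m - k + j ≤ b_α`; with `k = m` this is the
first claim. For the second, `L_b ∩ K_h` is not in `𝒳` and has `b - (m - h)` elements, while
every superset `J` of a subset of `L_b` with `b - (m - h) + 1` elements is rejected by Simes:
via `K_{|J|}` when `|J| > h`, and via the witness of `K_{h+1}` when `|J| ≤ h`.
-/

theorem List.Pairwise.getElem_le_iff_lt_countP {α : Type*} [LinearOrder α] {l : List α}
    (hl : l.Pairwise (· ≤ ·)) {k : ℕ} (hk : k < l.length) (x : α) :
    l[k] ≤ x ↔ k < l.countP (· ≤ x) := by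
  induction l generalizing k with
  | nil => simp at hk
  | cons a l ih =>
    rw [List.pairwise_cons] at hl
    by_cases ha : a ≤ x
    · cases k with
      | zero => simp [ha]
      | succ k => simp [ih hl.2 (by simpa using hk), ha]
    · have hlt : ∀ y ∈ a :: l, x < y :=
        List.forall_mem_cons.mpr ⟨not_le.mp ha, fun y hy => (not_le.mp ha).trans_le (hl.1 y hy)⟩
      have h0 : (a :: l).countP (· ≤ x) = 0 :=
        List.countP_eq_zero.mpr fun y hy hyx => (hlt y hy).not_ge (by simpa using hyx)
      simp only [h0, Nat.not_lt_zero, iff_false, not_le]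
      exact hlt _ (List.getElem_mem hk)

section Ranks

variable {m : ℕ} {r : Fin m → Fin m}

theorem mem_Lset (hr : r.Injective) {j : Fin m} {c : ℕ} : r j ∈ Lset r c ↔ (j : ℕ) < c := by
  simp [Lset, hr.eq_iff]

theorem mem_Kset (hr : r.Injective) {j : Fin m} {i : ℕ} : r j ∈ Kset r i ↔ m - i ≤ j := by
  simp [Kset, hr.eq_iff]

theorem card_Lset (hr : r.Injective) (c : ℕ) : #(Lset r c) = min m c := by
  rw [Lset, card_image_of_injective _ hr, Fin.card_filter_val_lt]

theorem Lset_mono {c c' : ℕ} (h : c ≤ c') : Lset r c ⊆ Lset r c' := by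
  intro y hy
  simp only [Lset, mem_image, mem_filter, mem_univ, true_and] at hy ⊢
  obtain ⟨j, hj, rfl⟩ := hy
  exact ⟨j, hj.trans_le h, rfl⟩

theorem Lset_self (hr : r.Surjective) : Lset r m = univ := by
  simpa [Lset] using image_univ_of_surjective hr

theorem Kset_eq_compl (hr : r.Bijective) (i : ℕ) : Kset r i = (Lset r (m - i))ᶜ := by
  ext y
  obtain ⟨j, rfl⟩ := hr.2 y
  rw [mem_compl, mem_Kset hr.1, mem_Lset hr.1]
  omega

theorem Kset_zero : Kset r 0 = ∅ := by
  simp [Kset]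

theorem Kset_self (hr : r.Bijective) : Kset r m = univ := by
  simp [Kset_eq_compl hr, Lset]

theorem card_Kset (hr : r.Bijective) {i : ℕ} (hi : i ≤ m) : #(Kset r i) = i := by
  rw [Kset_eq_compl hr, card_compl, Fintype.card_fin, card_Lset hr.1]
  omega

theorem card_Lset_inter_Kset (hr : r.Bijective) {c : ℕ} (hc : c ≤ m) (i : ℕ) :
    #(Lset r c ∩ Kset r i) = c - (m - i) := by
  rw [Kset_eq_compl hr, ← sdiff_eq_inter_compl]
  rcases le_total (m - i) c with h | h
  · rw [card_sdiff_of_subset (Lset_mono h), card_Lset hr.1, card_Lset hr.1]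
    omega
  · rw [sdiff_eq_empty_iff_subset.mpr (Lset_mono h), card_empty]
    omega

theorem card_inter_Lset_le (hr : r.Injective) (J : Finset (Fin m)) (c c' : ℕ) :
    #(J ∩ Lset r c') ≤ #(J ∩ Lset r c) + (c' - c) := by
  rcases le_total c c' with h | h
  · have hsub : J ∩ Lset r c' ⊆ (J ∩ Lset r c) ∪ (Lset r c' \ Lset r c) := by
      intro y hy
      by_cases hyc : y ∈ Lset r c <;> simp_all
    have hdiff : #(Lset r c' \ Lset r c) ≤ c' - c := by
      rw [card_sdiff_of_subset (Lset_mono h), card_Lset hr, card_Lset hr]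
      omega
    calc #(J ∩ Lset r c') ≤ #((J ∩ Lset r c) ∪ (Lset r c' \ Lset r c)) := card_le_card hsub
      _ ≤ #(J ∩ Lset r c) + #(Lset r c' \ Lset r c) := card_union_le _ _
      _ ≤ _ := by omega
  · exact (card_le_card (inter_subset_inter_left (Lset_mono h))).trans (Nat.le_add_right _ _)

theorem eq_Lset_card_of_lower (hr : r.Bijective) {A : Finset (Fin m)}
    (hA : ∀ i j, i ≤ j → r j ∈ A → r i ∈ A) : A = Lset r #A := by
  have hcard : #A = #{i | r i ∈ A} := by
    have himage : image r {i | r i ∈ A} = A := by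
      ext y
      obtain ⟨j, rfl⟩ := hr.2 y
      simp [hr.1.eq_iff]
    conv_lhs => rw [← himage]
    exact card_image_of_injective _ hr.1
  ext y
  obtain ⟨j, rfl⟩ := hr.2 y
  rw [mem_Lset hr.1, hcard, Fin.lt_card_filter_univ_iff_apply_of_imp _ fun i k hki => hA k i hki]

end Ranks

section Simes

variable {m : ℕ} {α : ℝ} {p : Fin m → ℝ} {r : Fin m → Fin m}

theorem pOrd_le_iff {I : Finset (Fin m)} {j : ℕ} (hj : 1 ≤ j) (hjI : j ≤ #I) (x : ℝ) :
    pOrd p I j ≤ x ↔ j ≤ #{y ∈ I | p y ≤ x} := by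
  have hlen : ((I.val.map p).sort (· ≤ ·)).length = #I := by simp
  rw [pOrd, List.getD_eq_getElem _ _ (by omega),
    (Multiset.pairwise_sort _ _).getElem_le_iff_lt_countP, ← Multiset.coe_countP,
    Multiset.sort_eq, Multiset.countP_map, Finset.card_def, Finset.filter_val]
  omega

theorem mul_pOrd_le_iff {I : Finset (Fin m)} {j : ℕ} (hj : 1 ≤ j) (hjI : j ≤ #I) {c : ℝ}
    (hc : 0 < c) (d : ℝ) : c * pOrd p I j ≤ d ↔ j ≤ #{y ∈ I | c * p y ≤ d} := by
  simp_rw [mul_comm c, ← le_div_iff₀ hc]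
  exact pOrd_le_iff hj hjI _

theorem simesU_iff {I : Finset (Fin m)} :
    SimesU α p I ↔ ∃ i : ℕ, 1 ≤ i ∧ i ≤ #{y ∈ I | (#I : ℝ) * p y ≤ i * α} := by
  constructor
  · rintro ⟨i, hi, hiI, hle⟩
    exact ⟨i, hi, (mul_pOrd_le_iff hi hiI (Nat.cast_pos.mpr (by omega)) _).mp hle⟩
  · rintro ⟨i, hi, hle⟩
    have hiI : i ≤ #I := hle.trans (card_filter_le _ _)
    exact ⟨i, hi, hiI, (mul_pOrd_le_iff hi hiI (Nat.cast_pos.mpr (by omega)) _).mpr hle⟩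

theorem not_simesU_empty : ¬ SimesU α p ∅ := by
  rintro ⟨i, hi, hi0, -⟩
  simp at hi0
  omega

theorem bddAbove_bval_set :
    BddAbove {i | 1 ≤ i ∧ i ≤ m ∧ (m : ℝ) * pOrd p univ i ≤ (i : ℝ) * α} :=
  ⟨m, fun _ hi => hi.2.1⟩

theorem le_bval {i : ℕ} (hi : 1 ≤ i) (h : i ≤ #{y | (m : ℝ) * p y ≤ i * α}) : i ≤ bval α p := by
  have him : i ≤ m := h.trans (card_filter_le _ _) |>.trans_eq (card_fin m)
  refine le_csSup bddAbove_bval_set ⟨hi, him, ?_⟩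
  exact (mul_pOrd_le_iff hi (him.trans_eq (card_fin m).symm) (Nat.cast_pos.mpr (by omega)) _).mpr h

theorem bval_le : bval α p ≤ m :=
  csSup_le' fun _ hi => hi.2.1

theorem bval_pos_iff : 0 < bval α p ↔ SimesU α p univ := by
  rw [SimesU, card_fin]
  constructor
  · intro hb
    have hne : {i | 1 ≤ i ∧ i ≤ m ∧ (m : ℝ) * pOrd p univ i ≤ (i : ℝ) * α}.Nonempty := by
      by_contra h
      simp [bval, Set.not_nonempty_iff_eq_empty.mp h] at hb
    exact ⟨_, Nat.sSup_mem hne bddAbove_bval_set⟩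
  · rintro ⟨i, hi⟩
    exact hi.1.trans (le_csSup bddAbove_bval_set hi)

theorem bddAbove_hval_set : BddAbove {i | i ≤ m ∧ ¬ SimesU α p (Kset r i)} :=
  ⟨m, fun _ hi => hi.1⟩

theorem hval_mem : hval α p r ∈ {i | i ≤ m ∧ ¬ SimesU α p (Kset r i)} :=
  Nat.sSup_mem ⟨0, Nat.zero_le m, by rw [Kset_zero]; exact not_simesU_empty⟩ bddAbove_hval_set

theorem simesU_Kset_of_hval_lt {i : ℕ} (hi : hval α p r < i) (him : i ≤ m) :
    SimesU α p (Kset r i) := by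
  by_contra h
  exact (le_csSup bddAbove_hval_set ⟨him, h⟩).not_gt hi

theorem hval_lt_iff (hr : r.Bijective) : hval α p r < m ↔ SimesU α p univ := by
  rw [← Kset_self hr]
  refine ⟨fun h => simesU_Kset_of_hval_lt h le_rfl, fun hU => hval_mem.1.lt_of_ne ?_⟩
  intro h
  exact hval_mem.2 (by rwa [h])

theorem tval_eq {S I₀ : Finset (Fin m)} {t : ℕ} (hmax : ∀ I ⊆ S, ¬ ClosedX α p I → #I ≤ t)
    (hI₀ : I₀ ⊆ S) (hI₀X : ¬ ClosedX α p I₀) (hcard : #I₀ = t) : tval α p S = t :=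
  IsGreatest.csSup_eq ⟨⟨I₀, hI₀, hI₀X, hcard⟩, by rintro _ ⟨I, hI, hIX, rfl⟩; exact hmax I hI hIX⟩

end Simes

section SortedPValues

variable {m : ℕ} {α : ℝ} {p : Fin m → ℝ} {r : Fin m → Fin m}

theorem filter_mul_le_eq_Lset (hr : r.Bijective) (hmono : ∀ i j, i ≤ j → p (r i) ≤ p (r j))
    {c : ℝ} (hc : 0 ≤ c) (d : ℝ) :
    ({y | c * p y ≤ d} : Finset (Fin m)) = Lset r #{y | c * p y ≤ d} :=
  eq_Lset_card_of_lower hr fun i j hij hj => by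
    simp only [mem_filter, mem_univ, true_and] at hj ⊢
    exact (mul_le_mul_of_nonneg_left (hmono i j hij) hc).trans hj

theorem card_filter_Kset (hr : r.Bijective) (hmono : ∀ i j, i ≤ j → p (r i) ≤ p (r j))
    (k : ℕ) (d : ℝ) :
    #{y ∈ Kset r k | (k : ℝ) * p y ≤ d} = #{y | (k : ℝ) * p y ≤ d} - (m - k) := by
  have hN : #{y | (k : ℝ) * p y ≤ d} ≤ m := (card_filter_le _ _).trans_eq (card_fin m)
  rw [← card_Lset_inter_Kset hr hN k, ← filter_mul_le_eq_Lset hr hmono (Nat.cast_nonneg k),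
    inter_comm, inter_filter, inter_univ]

theorem le_bval_of_Kset (hr : r.Bijective) (hmono : ∀ i j, i ≤ j → p (r i) ≤ p (r j))
    (hα : 0 ≤ α) {k j : ℕ} (hk : k ≤ m) (hj : 1 ≤ j)
    (hw : j ≤ #{y ∈ Kset r k | (k : ℝ) * p y ≤ j * α}) : m - k + j ≤ bval α p := by
  have hjk : j ≤ k := hw.trans ((card_filter_le _ _).trans_eq (card_Kset hr hk))
  rw [card_filter_Kset hr hmono] at hw
  -- `m * j ≤ k * (m - k + j)` since `(m - k) * (k - j) ≥ 0`
  have hscale : ∀ y, (k : ℝ) * p y ≤ j * α → (m : ℝ) * p y ≤ ((m - k + j : ℕ) : ℝ) * α := by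
    intro y hy
    have hk' : (k : ℝ) ≤ m := by exact_mod_cast hk
    have hjk' : (j : ℝ) ≤ k := by exact_mod_cast hjk
    have hj' : (1 : ℝ) ≤ j := by exact_mod_cast hj
    push_cast [hk]
    nlinarith [mul_le_mul_of_nonneg_left hy (Nat.cast_nonneg m),
      mul_nonneg (mul_nonneg (sub_nonneg.mpr hk') (sub_nonneg.mpr hjk')) hα]
  exact le_bval (by omega) ((by omega : m - k + j ≤ #{y | (k : ℝ) * p y ≤ j * α}).trans
    (card_le_card (monotone_filter_right _ fun y _ => hscale y)))

/-- The threshold set of the witness `j` is an initial segment `L_N` with `N ≥ m - k + j`, which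
`J` meets in at least `j` points. -/
theorem simesU_of_Kset (hr : r.Bijective) (hmono : ∀ i j, i ≤ j → p (r i) ≤ p (r j))
    (hp : ∀ i, 0 ≤ p i) {J : Finset (Fin m)} {k b j : ℕ} (hk : k ≤ m)
    (hj : 1 ≤ j) (hw : j ≤ #{y ∈ Kset r k | (k : ℝ) * p y ≤ j * α}) (hjb : m - k + j ≤ b)
    (hJk : #J ≤ k) (hJb : b - (m - k) ≤ #(J ∩ Lset r b)) : SimesU α p J := by
  rw [card_filter_Kset hr hmono] at hw
  have hN := filter_mul_le_eq_Lset hr hmono (Nat.cast_nonneg k) (j * α)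
  have hshift := card_inter_Lset_le hr.1 J #{y | (k : ℝ) * p y ≤ j * α} b
  refine simesU_iff.mpr ⟨j, hj, ?_⟩
  calc j ≤ #(J ∩ Lset r #{y | (k : ℝ) * p y ≤ j * α}) := by omega
    _ = #{y ∈ J | (k : ℝ) * p y ≤ j * α} := by rw [← hN, inter_filter, inter_univ]
    _ ≤ #{y ∈ J | (#J : ℝ) * p y ≤ j * α} := card_le_card <| monotone_filter_right _ fun y _ hy =>
          (mul_le_mul_of_nonneg_right (by exact_mod_cast hJk) (hp y)).trans hy

theorem sub_hval_le_bval (hr : r.Bijective) (hmono : ∀ i j, i ≤ j → p (r i) ≤ p (r j))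
    (hα : 0 ≤ α) : m - hval α p r ≤ bval α p := by
  by_contra! h
  have hK : SimesU α p (Kset r (m - bval α p)) := simesU_Kset_of_hval_lt (by omega) (by omega)
  obtain ⟨j, hj, hw⟩ := simesU_iff.mp hK
  rw [card_Kset hr (by omega)] at hw
  have := le_bval_of_Kset hr hmono hα (by omega) hj hw
  omega

theorem closedX_of_subset_Lset_bval (hr : r.Bijective) (hmono : ∀ i j, i ≤ j → p (r i) ≤ p (r j))
    (hp : ∀ i, 0 ≤ p i) (hα : 0 ≤ α) (hh : hval α p r < m) {I : Finset (Fin m)}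
    (hIL : I ⊆ Lset r (bval α p)) (hI : bval α p - (m - (hval α p r + 1)) ≤ #I) :
    ClosedX α p I := by
  intro J hIJ
  have hJm : #J ≤ m := (card_le_univ J).trans_eq (Fintype.card_fin m)
  by_cases hJh : #J ≤ hval α p r
  · obtain ⟨j, hj, hw⟩ := simesU_iff.mp (simesU_Kset_of_hval_lt (lt_add_one _) hh)
    rw [card_Kset hr (i := hval α p r + 1) hh] at hw
    exact simesU_of_Kset hr hmono hp hh hj hw (le_bval_of_Kset hr hmono hα hh hj hw) (by omega)
      (hI.trans (card_le_card (subset_inter hIJ hIL)))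
  · obtain ⟨j, hj, hw⟩ := simesU_iff.mp (simesU_Kset_of_hval_lt (not_le.mp hJh) hJm)
    rw [card_Kset hr hJm] at hw
    have hjJ : j ≤ #J := hw.trans ((card_filter_le _ _).trans_eq (card_Kset hr hJm))
    refine simesU_of_Kset hr hmono hp hJm hj hw (b := m) (by omega) le_rfl ?_
    rw [Lset_self hr.2, inter_univ]
    omega

theorem tval_Lset_bval (hr : r.Bijective) (hmono : ∀ i j, i ≤ j → p (r i) ≤ p (r j))
    (hp : ∀ i, 0 ≤ p i) (hα : 0 ≤ α) (hh : hval α p r < m) :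
    tval α p (Lset r (bval α p)) = bval α p - (m - hval α p r) := by
  have hmhb := sub_hval_le_bval hr hmono hα
  refine tval_eq (fun I hIL hIX => ?_) inter_subset_left ?_ (card_Lset_inter_Kset hr bval_le _)
  · by_contra! hI
    exact hIX (closedX_of_subset_Lset_bval hr hmono hp hα hh hIL (by omega))
  · exact fun hX => hval_mem.2 (hX _ inter_subset_right)

end SortedPValues

theorem stmt12_general
    (m : ℕ) (α : ℝ) (hα : 0 ≤ α ∧ α ≤ 1)
    (p : Fin m → ℝ) (hp : ∀ i, 0 ≤ p i ∧ p i ≤ 1)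
    (r : Fin m → Fin m) (hr : Function.Bijective r)
    (hmono : ∀ i j : Fin m, i ≤ j → p (r i) ≤ p (r j)) :
    (hval α p r < m ↔ 0 < bval α p) ∧
    (hval α p r < m →
      dval α p (Lset r (bval α p)) = m - hval α p r ∧
      qval α p (Lset r (bval α p)) =
        ((bval α p : ℝ) - m + hval α p r) / (bval α p : ℝ) ∧
      qval α p (Lset r (bval α p)) < 1) := by
  have hiff : hval α p r < m ↔ 0 < bval α p := (hval_lt_iff hr).trans bval_pos_iff.symm
  refine ⟨hiff, fun hh => ?_⟩
  have hb := hiff.mp hh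
  have hmhb := sub_hval_le_bval hr hmono hα.1
  have ht := tval_Lset_bval hr hmono (fun i => (hp i).1) hα.1 hh
  have hcard : #(Lset r (bval α p)) = bval α p := by
    rw [card_Lset hr.1, min_eq_right bval_le]
  have hq : qval α p (Lset r (bval α p)) = ((bval α p : ℝ) - m + hval α p r) / bval α p := by
    rw [qval, if_neg (nonempty_iff_ne_empty.mp (card_pos.mp (hcard.symm ▸ hb))), ht, hcard,
      Nat.cast_sub hmhb, Nat.cast_sub hval_mem.1]
    ring
  refine ⟨by rw [dval, hcard, ht]; omega, hq, ?_⟩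
  rw [hq, div_lt_one (by exact_mod_cast hb)]
  have : (hval α p r : ℝ) < m := by exact_mod_cast hh
  linarith

theorem stmt12
    (m : ℕ) (hm : 1 ≤ m) (α : ℝ) (hα : 0 ≤ α ∧ α ≤ 1)
    (p : Fin m → ℝ) (hp : ∀ i, 0 ≤ p i ∧ p i ≤ 1)
    (r : Fin m → Fin m) (hr : Function.Bijective r)
    (hmono : ∀ i j : Fin m, i ≤ j → p (r i) ≤ p (r j)) :
    (hval α p r < m ↔ 0 < bval α p) ∧
    (hval α p r < m →
      dval α p (Lset r (bval α p)) = m - hval α p r ∧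
      qval α p (Lset r (bval α p)) =
        ((bval α p : ℝ) - m + hval α p r) / (bval α p : ℝ) ∧
      qval α p (Lset r (bval α p)) < 1) :=
  stmt12_general m α hα p hp r hr hmono
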